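/- arXiv:2201.12987 — 2 statements merged into one kernel-verified Lean document; each statement's English description precedes it below -/
import Mathlib

section
/- Let Ω be a finite probability space, let G be a discrete random variable with values in a finite type, let G_S* = φ*(G) for a deterministic map φ*, let f be a deterministic real-valued map on the codomain of φ*, and let ε be a real-valued random variable independent of G. If Y = f(G_S*) + ε, then the conditional mutual information I(G ; Y | G_S*) = 0, i.e., G and Y are conditionally independent given G_S*. -/
open Finset

variable {Ω : Type*} [Fintype Ω]

/-- The probability mass function of a random variable `X : Ω → α` on a finite sample
space `Ω` weighted by `μ`. -/
noncomputable def pmfOf {α : Type*} [DecidableEq α] (μ : Ω → ℝ) (X : Ω → α) (a : α) : ℝ :=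
  ∑ ω, if X ω = a then μ ω else 0

/-- `μ` is a probability mass function on the finite sample space `Ω`. -/
def IsPMF (μ : Ω → ℝ) : Prop := (∀ ω, 0 ≤ μ ω) ∧ ∑ ω, μ ω = 1

/-- Shannon entropy (natural logarithm) of a discrete random variable `X`:
`H(X) = -∑_a P(X = a) log P(X = a)`, written as a sum over the sample space. -/
noncomputable def entropy {α : Type*} [DecidableEq α] (μ : Ω → ℝ) (X : Ω → α) : ℝ :=
  -∑ ω, μ ω * Real.log (pmfOf μ X (X ω))

/-- Shannon mutual information `I(X ; Y) = H(X) + H(Y) - H(X, Y)`. -/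
noncomputable def mutualInfo {α β : Type*} [DecidableEq α] [DecidableEq β]
    (μ : Ω → ℝ) (X : Ω → α) (Y : Ω → β) : ℝ :=
  entropy μ X + entropy μ Y - entropy μ (fun ω => (X ω, Y ω))

/-- Conditional mutual information
`I(X ; Z ∣ W) = H(X, W) + H(Z, W) - H(X, Z, W) - H(W)`. -/
noncomputable def condMutualInfo {α β γ : Type*} [DecidableEq α] [DecidableEq β] [DecidableEq γ]
    (μ : Ω → ℝ) (X : Ω → α) (Z : Ω → β) (W : Ω → γ) : ℝ :=
  entropy μ (fun ω => (X ω, W ω)) + entropy μ (fun ω => (Z ω, W ω))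
    - entropy μ (fun ω => (X ω, Z ω, W ω)) - entropy μ W

/-- Independence of two discrete random variables: the joint pmf factors as the product
of the marginal pmfs. -/
def Indep {α β : Type*} [DecidableEq α] [DecidableEq β]
    (μ : Ω → ℝ) (X : Ω → α) (Y : Ω → β) : Prop :=
  ∀ a b, pmfOf μ (fun ω => (X ω, Y ω)) (a, b) = pmfOf μ X a * pmfOf μ Y b

/-!
Conditioning on `S = φ*(G)` makes `Y = f(S) + ε` a relabelling of `ε`, so entropy bookkeeping
gives `H(G, S) = H(G)`, `H(Y, S) = H(ε, S)` and `H(G, Y, S) = H(ε, G)`. Since `ε` is independent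
of `G`, hence of `S`, both joint entropies split, and the four terms of `I(G ; Y ∣ S)` cancel.
-/

section Entropy

variable {α β : Type*} [DecidableEq α] [DecidableEq β]

lemma pmfOf_comp_injective (μ : Ω → ℝ) (X : Ω → α) {e : α → β} (he : Function.Injective e) (a : α) :
    pmfOf μ (fun ω => e (X ω)) (e a) = pmfOf μ X a := by
  simp only [pmfOf, he.eq_iff]

lemma entropy_comp_injective (μ : Ω → ℝ) (X : Ω → α) {e : α → β} (he : Function.Injective e) :
    entropy μ (fun ω => e (X ω)) = entropy μ X := by
  simp only [entropy, pmfOf_comp_injective μ X he]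

lemma le_pmfOf_apply {μ : Ω → ℝ} (hμ : ∀ ω, 0 ≤ μ ω) (X : Ω → α) (ω : Ω) :
    μ ω ≤ pmfOf μ X (X ω) := by
  simpa [pmfOf] using single_le_sum (f := fun ω' => if X ω' = X ω then μ ω' else 0)
    (fun ω' _ => by split_ifs <;> simp [hμ ω']) (mem_univ ω)

lemma Indep.entropy_pair {μ : Ω → ℝ} {X : Ω → α} {Y : Ω → β} (h : Indep μ X Y) (hμ : ∀ ω, 0 ≤ μ ω) :
    entropy μ (fun ω => (X ω, Y ω)) = entropy μ X + entropy μ Y := by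
  simp only [entropy, ← neg_add, ← sum_add_distrib, ← mul_add]
  congr 1
  refine sum_congr rfl fun ω _ => ?_
  rcases (hμ ω).eq_or_lt with hω | hω
  · simp [← hω]
  · have hX := hω.trans_le (le_pmfOf_apply hμ X ω)
    have hY := hω.trans_le (le_pmfOf_apply hμ Y ω)
    rw [h, Real.log_mul hX.ne' hY.ne']

end Entropy

section Independence

variable {α γ δ : Type*} [DecidableEq α] [Fintype γ] [DecidableEq γ] [DecidableEq δ]

lemma sum_ite_comp_eq_sum_filter {M : Type*} [AddCommMonoid M] (g : Ω → M) (G : Ω → γ)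
    (φ : γ → δ) (s : δ) :
    ∑ ω, (if φ (G ω) = s then g ω else 0) = ∑ c with φ c = s, ∑ ω, if G ω = c then g ω else 0 := by
  rw [sum_comm]
  refine sum_congr rfl fun ω _ => ?_
  rw [sum_ite_eq]
  simp

lemma Indep.comp_right {μ : Ω → ℝ} {X : Ω → α} {G : Ω → γ} (h : Indep μ X G) (φ : γ → δ) :
    Indep μ X (fun ω => φ (G ω)) := by
  intro a s
  have hjoint := sum_ite_comp_eq_sum_filter (fun ω => if X ω = a then μ ω else 0) G φ s
  have hmarginal := sum_ite_comp_eq_sum_filter μ G φ s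
  simp only [← ite_and] at hjoint
  simp only [pmfOf, Prod.mk.injEq, and_comm (a := X _ = a)]
  rw [hjoint, hmarginal, mul_sum]
  exact sum_congr rfl fun c _ => by
    simpa only [pmfOf, Prod.mk.injEq, and_comm (a := X _ = a)] using h a c

end Independence

theorem condMutualInfo_G_Y_eq_zero_general
    {𝒢 𝒮 : Type*} [Fintype 𝒢] [DecidableEq 𝒢] [DecidableEq 𝒮]
    (μ : Ω → ℝ) (hμ : IsPMF μ)
    (G : Ω → 𝒢) (φStar : 𝒢 → 𝒮) (f : 𝒮 → ℝ) (ε Y : Ω → ℝ)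
    (hY : ∀ ω, Y ω = f (φStar (G ω)) + ε ω)
    (hIndep : Indep μ ε G) :
    condMutualInfo μ G Y (fun ω => φStar (G ω)) = 0 := by
  obtain ⟨hμ, -⟩ := hμ
  obtain rfl : Y = fun ω => f (φStar (G ω)) + ε ω := funext hY
  have hGS : entropy μ (fun ω => (G ω, φStar (G ω))) = entropy μ G :=
    entropy_comp_injective μ G (e := fun c => (c, φStar c))
      (Function.LeftInverse.injective (g := Prod.fst) fun _ => rfl)
  have hYS : entropy μ (fun ω => (f (φStar (G ω)) + ε ω, φStar (G ω)))
      = entropy μ ε + entropy μ (fun ω => φStar (G ω)) :=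
    (entropy_comp_injective μ (fun ω => (ε ω, φStar (G ω))) (e := fun p => (f p.2 + p.1, p.2))
      (Function.LeftInverse.injective (g := fun q => (q.1 - f q.2, q.2)) fun _ => by simp)).trans
      ((hIndep.comp_right φStar).entropy_pair hμ)
  have hGYS : entropy μ (fun ω => (G ω, f (φStar (G ω)) + ε ω, φStar (G ω)))
      = entropy μ ε + entropy μ G :=
    (entropy_comp_injective μ (fun ω => (ε ω, G ω))
      (e := fun p => (p.2, f (φStar p.2) + p.1, φStar p.2))
      (Function.LeftInverse.injective (g := fun q => (q.2.1 - f q.2.2, q.1))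
        fun _ => by simp)).trans
      (hIndep.entropy_pair hμ)
  rw [condMutualInfo, hGS, hYS, hGYS]
  ring

/-- If `Y = f(G_S*) + ε` where `G_S* = φ*(G)` and `ε` is independent of `G`, then
`I(G ; Y ∣ G_S*) = 0`, i.e. `G` and `Y` are conditionally independent given `G_S*`. -/
theorem condMutualInfo_G_Y_eq_zero
    {𝒢 𝒮 : Type*} [Fintype 𝒢] [Fintype 𝒮] [DecidableEq 𝒢] [DecidableEq 𝒮]
    (μ : Ω → ℝ) (hμ : IsPMF μ)
    (G : Ω → 𝒢) (φStar : 𝒢 → 𝒮) (f : 𝒮 → ℝ) (ε Y : Ω → ℝ)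
    (hY : ∀ ω, Y ω = f (φStar (G ω)) + ε ω)
    (hIndep : Indep μ ε G) :
    condMutualInfo μ G Y (fun ω => φStar (G ω)) = 0 :=
  condMutualInfo_G_Y_eq_zero_general μ hμ G φStar f ε Y hY hIndep
end

section
/- Let Ω be a finite probability space, let G, Y be discrete random variables with values in finite types, let β ∈ [0,1], and let G_S range over deterministic functions of G. If G_S* is a deterministic function of G satisfying (1 − β)·I(G ; Y | G_S*) + β·I(G ; G_S* | Y) = 0, then for every deterministic function G_S of G, I(G_S ; Y) − β·I(G_S ; G) ≤ I(G_S* ; Y) − β·I(G_S* ; G); that is, any G_S* attaining the lower bound 0 of the nonnegative quantity (1 − β)·I(G ; Y | G_S) + β·I(G ; G_S | Y) maximizes the GIB objective. -/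
/-!
Because `G_S = φ(G)` is a function of `G`, every joint entropy containing both `G` and `G_S`
collapses, and the GIB objective becomes `(1 - β) I(Y ; G)` minus the penalty
`(1 - β) I(G ; Y ∣ G_S) + β I(G ; G_S ∣ Y)`. The first term does not depend on `φ`, and for
`β ∈ [0, 1]` the penalty is nonnegative, so a `φ*` with zero penalty is a maximizer.
Nonnegativity of `I(X ; Z ∣ W)` is Gibbs' inequality: it is `-E[log r]` for the ratio
`r = p(x, w) p(z, w) / (p(x, z, w) p(w))`, and `log r ≤ r - 1` with `E[r] ≤ 1` because
summing `p(x, w) p(z, w) / p(w)` over `x` and `z` gives back `p(w)`.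
-/

open Finset

variable {Ω : Type*} [Fintype Ω]

section Entropy

variable {α β γ : Type*} [DecidableEq α] [DecidableEq β] [DecidableEq γ] {μ : Ω → ℝ}

lemma pmfOf_nonneg (hμ : ∀ ω, 0 ≤ μ ω) (X : Ω → α) (a : α) : 0 ≤ pmfOf μ X a :=
  sum_nonneg fun ω _ => by split <;> simp [hμ ω]

lemma le_pmfOf_self (hμ : ∀ ω, 0 ≤ μ ω) (X : Ω → α) (ω : Ω) : μ ω ≤ pmfOf μ X (X ω) := by
  unfold pmfOf
  simpa using single_le_sum (f := fun ω' => if X ω' = X ω then μ ω' else 0)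
    (fun ω' _ => by split <;> simp [hμ ω']) (mem_univ ω)

lemma pmfOf_self_pos (hμ : ∀ ω, 0 ≤ μ ω) (X : Ω → α) {ω : Ω} (hω : 0 < μ ω) :
    0 < pmfOf μ X (X ω) :=
  hω.trans_le (le_pmfOf_self hμ X ω)

lemma sum_mul_comp_eq_sum_pmfOf_mul [Fintype α] (X : Ω → α) (f : α → ℝ) :
    ∑ ω, μ ω * f (X ω) = ∑ a, pmfOf μ X a * f a := by
  simp only [pmfOf, sum_mul, ite_mul, zero_mul]
  rw [sum_comm]
  simp

lemma sum_pmfOf [Fintype α] (hμ : IsPMF μ) (X : Ω → α) : ∑ a, pmfOf μ X a = 1 := by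
  simpa [hμ.2] using (sum_mul_comp_eq_sum_pmfOf_mul (μ := μ) X fun _ => 1).symm

lemma sum_pmfOf_pair [Fintype α] (X : Ω → α) (W : Ω → γ) (w : γ) :
    ∑ a, pmfOf μ (fun ω => (X ω, W ω)) (a, w) = pmfOf μ W w := by
  unfold pmfOf
  rw [sum_comm]
  refine sum_congr rfl fun ω _ => ?_
  by_cases h : W ω = w <;> simp [Prod.ext_iff, h]

lemma entropy_comp_of_injective {f : α → β} (hf : Function.Injective f) (X : Ω → α) :
    entropy μ (fun ω => f (X ω)) = entropy μ X := by
  have hpmf (a : α) : pmfOf μ (fun ω => f (X ω)) (f a) = pmfOf μ X a :=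
    sum_congr rfl fun ω _ => by simp [hf.eq_iff]
  simp only [entropy, hpmf]

end Entropy

lemma sum_mul_log_nonpos {μ r : Ω → ℝ} (hμ : IsPMF μ) (hr : ∀ ω, 0 < μ ω → 0 < r ω)
    (hsum : ∑ ω, μ ω * r ω ≤ 1) : ∑ ω, μ ω * Real.log (r ω) ≤ 0 :=
  calc ∑ ω, μ ω * Real.log (r ω)
      ≤ ∑ ω, μ ω * (r ω - 1) := sum_le_sum fun ω _ => by
        rcases (hμ.1 ω).eq_or_lt with h | h
        · simp [← h]
        · exact mul_le_mul_of_nonneg_left (Real.log_le_sub_one_of_pos (hr ω h)) h.le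
    _ = ∑ ω, μ ω * r ω - 1 := by simp only [mul_sub, mul_one, sum_sub_distrib, hμ.2]
    _ ≤ 0 := by linarith

section CondMutualInfo

variable {α β γ : Type*} [DecidableEq α] [DecidableEq β] [DecidableEq γ]
  {μ : Ω → ℝ} (X : Ω → α) (Z : Ω → β) (W : Ω → γ)

noncomputable def condIndepRatio (μ : Ω → ℝ) (t : α × β × γ) : ℝ :=
  pmfOf μ (fun ω => (X ω, W ω)) (t.1, t.2.2) * pmfOf μ (fun ω => (Z ω, W ω)) (t.2.1, t.2.2)
    / (pmfOf μ (fun ω => (X ω, Z ω, W ω)) t * pmfOf μ W t.2.2)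

lemma condMutualInfo_eq_neg_sum_mul_log_condIndepRatio (hμ : ∀ ω, 0 ≤ μ ω) :
    condMutualInfo μ X Z W
      = -∑ ω, μ ω * Real.log (condIndepRatio X Z W μ (X ω, Z ω, W ω)) := by
  have hlog (ω : Ω) : μ ω * Real.log (condIndepRatio X Z W μ (X ω, Z ω, W ω))
      = μ ω * Real.log (pmfOf μ (fun ω => (X ω, W ω)) (X ω, W ω))
        + μ ω * Real.log (pmfOf μ (fun ω => (Z ω, W ω)) (Z ω, W ω))
        - μ ω * Real.log (pmfOf μ (fun ω => (X ω, Z ω, W ω)) (X ω, Z ω, W ω))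
        - μ ω * Real.log (pmfOf μ W (W ω)) := by
    rcases (hμ ω).eq_or_lt with h | h
    · simp [← h]
    · have hXW := (pmfOf_self_pos hμ (fun ω => (X ω, W ω)) h).ne'
      have hZW := (pmfOf_self_pos hμ (fun ω => (Z ω, W ω)) h).ne'
      have hXZW := (pmfOf_self_pos hμ (fun ω => (X ω, Z ω, W ω)) h).ne'
      have hW := (pmfOf_self_pos hμ W h).ne'
      rw [condIndepRatio, Real.log_div (mul_ne_zero hXW hZW) (mul_ne_zero hXZW hW),
        Real.log_mul hXW hZW, Real.log_mul hXZW hW]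
      ring
  simp only [condMutualInfo, entropy, hlog, sum_add_distrib, sum_sub_distrib]
  ring

lemma sum_mul_condIndepRatio_le_one [Fintype α] [Fintype β] [Fintype γ] (hμ : IsPMF μ) :
    ∑ ω, μ ω * condIndepRatio X Z W μ (X ω, Z ω, W ω) ≤ 1 := by
  set pXW := pmfOf μ (fun ω => (X ω, W ω))
  set pZW := pmfOf μ (fun ω => (Z ω, W ω))
  set pW := pmfOf μ W
  calc ∑ ω, μ ω * condIndepRatio X Z W μ (X ω, Z ω, W ω)
      = ∑ t, pmfOf μ (fun ω => (X ω, Z ω, W ω)) t * condIndepRatio X Z W μ t :=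
        sum_mul_comp_eq_sum_pmfOf_mul (fun ω => (X ω, Z ω, W ω)) _
    _ ≤ ∑ t : α × β × γ, pXW (t.1, t.2.2) * pZW (t.2.1, t.2.2) / pW t.2.2 :=
        sum_le_sum fun t _ => by
          rw [condIndepRatio, mul_div_assoc']
          exact mul_div_mul_left_le (div_nonneg (mul_nonneg (pmfOf_nonneg hμ.1 _ _)
            (pmfOf_nonneg hμ.1 _ _)) (pmfOf_nonneg hμ.1 _ _))
    _ = ∑ w, pW w * pW w / pW w := by
        simp only [Fintype.sum_prod_type_right (α₁ := α), ← sum_div, ← sum_mul, pXW,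
          sum_pmfOf_pair]
        simp only [Fintype.sum_prod_type_right (α₁ := β), ← sum_div, ← mul_sum, pZW, pW,
          sum_pmfOf_pair]
    _ ≤ ∑ w, pW w := sum_le_sum fun w _ => by
        rcases eq_or_ne (pW w) 0 with h | h
        · simp [h]
        · rw [mul_div_assoc, div_self h, mul_one]
    _ = 1 := sum_pmfOf hμ W

theorem condMutualInfo_nonneg [Fintype α] [Fintype β] [Fintype γ] (hμ : IsPMF μ) :
    0 ≤ condMutualInfo μ X Z W := by
  rw [condMutualInfo_eq_neg_sum_mul_log_condIndepRatio X Z W hμ.1, neg_nonneg]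
  refine sum_mul_log_nonpos hμ (fun ω hω => ?_) (sum_mul_condIndepRatio_le_one X Z W hμ)
  exact div_pos (mul_pos (pmfOf_self_pos hμ.1 _ hω) (pmfOf_self_pos hμ.1 _ hω))
    (mul_pos (pmfOf_self_pos hμ.1 _ hω) (pmfOf_self_pos hμ.1 W hω))

end CondMutualInfo

section GIB

variable {𝒢 𝒴 𝒮 : Type*} [DecidableEq 𝒢] [DecidableEq 𝒴] [DecidableEq 𝒮]

noncomputable def gibObjective (μ : Ω → ℝ) (G : Ω → 𝒢) (Y : Ω → 𝒴) (β : ℝ) (φ : 𝒢 → 𝒮) : ℝ :=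
  mutualInfo μ (fun ω => φ (G ω)) Y - β * mutualInfo μ (fun ω => φ (G ω)) G

lemma gibObjective_eq (μ : Ω → ℝ) (G : Ω → 𝒢) (Y : Ω → 𝒴) (β : ℝ) (φ : 𝒢 → 𝒮) :
    gibObjective μ G Y β φ
      = (1 - β) * mutualInfo μ Y G
        - ((1 - β) * condMutualInfo μ G Y (fun ω => φ (G ω))
          + β * condMutualInfo μ G (fun ω => φ (G ω)) Y) := by
  have hφG : entropy μ (fun ω => (φ (G ω), G ω)) = entropy μ G :=
    entropy_comp_of_injective (f := fun g => (φ g, g))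
      (Function.LeftInverse.injective (g := Prod.snd) fun _ => rfl) G
  have hGφ : entropy μ (fun ω => (G ω, φ (G ω))) = entropy μ G :=
    entropy_comp_of_injective (f := fun g => (g, φ g))
      (Function.LeftInverse.injective (g := Prod.fst) fun _ => rfl) G
  have hGYφ : entropy μ (fun ω => (G ω, Y ω, φ (G ω))) = entropy μ (fun ω => (G ω, Y ω)) :=
    entropy_comp_of_injective (f := fun p : 𝒢 × 𝒴 => (p.1, p.2, φ p.1))
      (Function.LeftInverse.injective (g := fun t => (t.1, t.2.1)) fun _ => rfl)
      (fun ω => (G ω, Y ω))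
  have hGφY : entropy μ (fun ω => (G ω, φ (G ω), Y ω)) = entropy μ (fun ω => (G ω, Y ω)) :=
    entropy_comp_of_injective (f := fun p : 𝒢 × 𝒴 => (p.1, φ p.1, p.2))
      (Function.LeftInverse.injective (g := fun t => (t.1, t.2.2)) fun _ => rfl)
      (fun ω => (G ω, Y ω))
  have hYG : entropy μ (fun ω => (Y ω, G ω)) = entropy μ (fun ω => (G ω, Y ω)) :=
    entropy_comp_of_injective Prod.swap_injective (fun ω => (G ω, Y ω))
  have hYφ : entropy μ (fun ω => (Y ω, φ (G ω))) = entropy μ (fun ω => (φ (G ω), Y ω)) :=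
    entropy_comp_of_injective Prod.swap_injective (fun ω => (φ (G ω), Y ω))
  simp only [gibObjective, mutualInfo, condMutualInfo, hφG, hGφ, hGYφ, hGφY, hYG, hYφ]
  ring

end GIB

theorem gib_maximizer_of_attains_zero_general
    {𝒢 𝒴 𝒮 : Type*} [Fintype 𝒢] [Fintype 𝒴]
    [DecidableEq 𝒢] [DecidableEq 𝒴] [DecidableEq 𝒮]
    (μ : Ω → ℝ) (hμ : IsPMF μ) (G : Ω → 𝒢) (Y : Ω → 𝒴)
    (β : ℝ) (hβ : β ∈ Set.Icc (0 : ℝ) 1)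
    (φStar : 𝒢 → 𝒮)
    (hopt : (1 - β) * condMutualInfo μ G Y (fun ω => φStar (G ω))
        + β * condMutualInfo μ G (fun ω => φStar (G ω)) Y = 0) :
    ∀ {𝒮' : Type*} [Fintype 𝒮'] [DecidableEq 𝒮'] (φ : 𝒢 → 𝒮'),
      mutualInfo μ (fun ω => φ (G ω)) Y - β * mutualInfo μ (fun ω => φ (G ω)) G
        ≤ mutualInfo μ (fun ω => φStar (G ω)) Y
            - β * mutualInfo μ (fun ω => φStar (G ω)) G := by
  intro 𝒮' _ _ φ
  have hpenalty : 0 ≤ (1 - β) * condMutualInfo μ G Y (fun ω => φ (G ω))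
      + β * condMutualInfo μ G (fun ω => φ (G ω)) Y :=
    add_nonneg (mul_nonneg (sub_nonneg.2 hβ.2) (condMutualInfo_nonneg _ _ _ hμ))
      (mul_nonneg hβ.1 (condMutualInfo_nonneg _ _ _ hμ))
  change gibObjective μ G Y β φ ≤ gibObjective μ G Y β φStar
  rw [gibObjective_eq, gibObjective_eq, hopt]
  linarith

/-- Any deterministic subgraph `G_S* = φ*(G)` attaining the lower bound `0` of the
nonnegative quantity `(1 - β) I(G ; Y ∣ G_S) + β I(G ; G_S ∣ Y)` maximizes the GIB
objective `I(G_S ; Y) - β I(G_S ; G)` over deterministic functions `G_S` of `G`. -/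
theorem gib_maximizer_of_attains_zero
    {𝒢 𝒴 𝒮 : Type*} [Fintype 𝒢] [Fintype 𝒴] [Fintype 𝒮]
    [DecidableEq 𝒢] [DecidableEq 𝒴] [DecidableEq 𝒮]
    (μ : Ω → ℝ) (hμ : IsPMF μ) (G : Ω → 𝒢) (Y : Ω → 𝒴)
    (β : ℝ) (hβ : β ∈ Set.Icc (0 : ℝ) 1)
    (φStar : 𝒢 → 𝒮)
    (hopt : (1 - β) * condMutualInfo μ G Y (fun ω => φStar (G ω))
        + β * condMutualInfo μ G (fun ω => φStar (G ω)) Y = 0) :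
    ∀ {𝒮' : Type*} [Fintype 𝒮'] [DecidableEq 𝒮'] (φ : 𝒢 → 𝒮'),
      mutualInfo μ (fun ω => φ (G ω)) Y - β * mutualInfo μ (fun ω => φ (G ω)) G
        ≤ mutualInfo μ (fun ω => φStar (G ω)) Y
            - β * mutualInfo μ (fun ω => φStar (G ω)) G :=
  gib_maximizer_of_attains_zero_general μ hμ G Y β hβ φStar hopt
end
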